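/- arXiv:2302.00994 — 6 statements merged into one kernel-verified Lean document; each statement's English description precedes it below -/
import Mathlib

section
/- In the Woolly Hat graph WH_n(a,b,c,d), for x ∈ {b,c,d}, the vertices B_0 and C_x have a common neighbor if and only if x = 0; in that case the unique common neighbor is A_0. -/
/-- The basic (one-directional) adjacency relation of the Woolly Hat graph.
Vertices are pairs `(t, i)` with `t : Fin 3` (`0` = A-vertex, `1` = B-vertex,
`2` = C-vertex) and `i : ZMod n`. -/
def WHRel (n : ℕ) (a b c d : ZMod n) (u v : Fin 3 × ZMod n) : Prop :=
  (u.1 = 0 ∧ v.1 = 0 ∧ (v.2 = u.2 + a ∨ v.2 = u.2 - a)) ∨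
  (u.1 = 0 ∧ v.1 = 1 ∧ v.2 = u.2) ∨
  (u.1 = 0 ∧ v.1 = 2 ∧ v.2 = u.2) ∨
  (u.1 = 1 ∧ v.1 = 2 ∧ (v.2 = u.2 + b ∨ v.2 = u.2 + c ∨ v.2 = u.2 + d))

/-- The Woolly Hat graph `WH_n(a,b,c,d)`. -/
def WH (n : ℕ) (a b c d : ZMod n) : SimpleGraph (Fin 3 × ZMod n) where
  Adj u v := u ≠ v ∧ (WHRel n a b c d u v ∨ WHRel n a b c d v u)
  symm := ⟨fun u v h => ⟨h.1.symm, h.2.symm⟩⟩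
  loopless := ⟨fun v h => h.1 rfl⟩

/-! Besides its A-spoke, a B-vertex is adjacent only to C-vertices and a C-vertex only to
B-vertices, so the only possible common neighbour of `B_i` and `C_j` is `A_i`, which is
adjacent to `C_j` exactly when `i = j`. -/

namespace WH

variable {n : ℕ} {a b c d : ZMod n}

theorem adj_B_iff (w : Fin 3 × ZMod n) (i : ZMod n) :
    (WH n a b c d).Adj w (1, i) ↔
      w = (0, i) ∨ w.1 = 2 ∧ (w.2 = i + b ∨ w.2 = i + c ∨ w.2 = i + d) := by
  obtain ⟨t, j⟩ := w
  fin_cases t <;> simp [WH, WHRel, eq_comm]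

theorem adj_C_iff (w : Fin 3 × ZMod n) (j : ZMod n) :
    (WH n a b c d).Adj w (2, j) ↔
      w = (0, j) ∨ w.1 = 1 ∧ (j = w.2 + b ∨ j = w.2 + c ∨ j = w.2 + d) := by
  obtain ⟨t, i⟩ := w
  fin_cases t <;> simp [WH, WHRel, eq_comm]

theorem adj_B_and_adj_C_iff (w : Fin 3 × ZMod n) (i j : ZMod n) :
    (WH n a b c d).Adj w (1, i) ∧ (WH n a b c d).Adj w (2, j) ↔ w = (0, i) ∧ i = j := by
  rw [adj_B_iff, adj_C_iff]
  constructor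
  · rintro ⟨rfl | ⟨hB, -⟩, hC | ⟨hC, -⟩⟩
    · exact ⟨rfl, (Prod.mk.inj hC).2⟩
    · simp at hC
    · simp [hC] at hB
    · simp [hB] at hC
  · rintro ⟨rfl, rfl⟩
    exact ⟨Or.inl rfl, Or.inl rfl⟩

end WH

theorem common_neighbor_iff_general (n : ℕ) (a b c d : ZMod n) :
    ∀ x ∈ ({b, c, d} : Set (ZMod n)),
      ((∃ w : Fin 3 × ZMod n,
          (WH n a b c d).Adj w (1, 0) ∧ (WH n a b c d).Adj w (2, x)) ↔ x = 0) ∧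
      (∀ w : Fin 3 × ZMod n,
          (WH n a b c d).Adj w (1, 0) → (WH n a b c d).Adj w (2, x) →
            w = ((0 : Fin 3), (0 : ZMod n))) := by
  intro x _
  refine ⟨⟨?_, ?_⟩, fun w hB hC => ((WH.adj_B_and_adj_C_iff w 0 x).1 ⟨hB, hC⟩).1⟩
  · rintro ⟨w, hBC⟩
    exact ((WH.adj_B_and_adj_C_iff w 0 x).1 hBC).2.symm
  · rintro rfl
    exact ⟨(0, 0), (WH.adj_B_and_adj_C_iff _ 0 0).2 ⟨rfl, rfl⟩⟩

theorem common_neighbor_iff (n : ℕ) (hn : 3 ≤ n) (a b c d : ZMod n)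
    (ha : 2 * a ≠ 0) (hbc : b ≠ c) (hbd : b ≠ d) (hcd : c ≠ d) :
    ∀ x ∈ ({b, c, d} : Set (ZMod n)),
      ((∃ w : Fin 3 × ZMod n,
          (WH n a b c d).Adj w (1, 0) ∧ (WH n a b c d).Adj w (2, x)) ↔ x = 0) ∧
      (∀ w : Fin 3 × ZMod n,
          (WH n a b c d).Adj w (1, 0) → (WH n a b c d).Adj w (2, x) →
            w = ((0 : Fin 3), (0 : ZMod n))) :=
  common_neighbor_iff_general n a b c d
end

section
/- There is no edge-transitive Woolly Hat graph of girth 3. That is, if WH_n(a,b,c,d) is edge-transitive, then no edge of WH_n(a,b,c,d) of the form B_0 C_x (x ∈ {b,c,d}) lies on a 3-cycle, and consequently WH_n(a,b,c,d) edge-transitive implies b, c, d are all nonzero. -/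
/-- A graph is edge-transitive if its automorphism group acts transitively on edges. -/
def EdgeTransitive {V : Type*} (G : SimpleGraph V) : Prop :=
  ∀ e₁ ∈ G.edgeSet, ∀ e₂ ∈ G.edgeSet, ∃ φ : G ≃g G, Sym2.map φ e₁ = e₂

/-!
In `WH_n(a,b,c,d)` the only possible common neighbour of `B_0` and `C_x` is `A_0`, and only
when `x = 0`. So if, say, `b = 0`, the edge `B_0 C_0` lies on the triangle `A_0 B_0 C_0` while
the edge `B_0 C_c` (with `c ≠ b = 0`) lies on no triangle, and no automorphism can map the
first edge to the second.
-/

lemma EdgeTransitive.exists_common_adj {V : Type*} {G : SimpleGraph V} (hG : EdgeTransitive G)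
    {u v u' v' : V} (huv : G.Adj u v) (huv' : G.Adj u' v') (h : ∃ w, G.Adj w u ∧ G.Adj w v) :
    ∃ w, G.Adj w u' ∧ G.Adj w v' := by
  obtain ⟨φ, hφ⟩ := hG s(u, v) (G.mem_edgeSet.mpr huv) s(u', v') (G.mem_edgeSet.mpr huv')
  obtain ⟨w, hwu, hwv⟩ := h
  rw [Sym2.map_mk, Sym2.eq_iff] at hφ
  rcases hφ with ⟨rfl, rfl⟩ | ⟨rfl, rfl⟩
  · exact ⟨φ w, φ.map_adj_iff.mpr hwu, φ.map_adj_iff.mpr hwv⟩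
  · exact ⟨φ w, φ.map_adj_iff.mpr hwv, φ.map_adj_iff.mpr hwu⟩

namespace WH

variable {n : ℕ} {a b c d : ZMod n}

lemma adj_A_B (i : ZMod n) : (WH n a b c d).Adj (0, i) (1, i) :=
  ⟨by simp [Prod.ext_iff], Or.inl (by simp [WHRel])⟩

lemma adj_A_C (i : ZMod n) : (WH n a b c d).Adj (0, i) (2, i) :=
  ⟨by simp [Prod.ext_iff], Or.inl (by simp [WHRel])⟩

lemma adj_B_C {x : ZMod n} (hx : x ∈ ({b, c, d} : Set (ZMod n))) :
    (WH n a b c d).Adj (1, 0) (2, x) := by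
  refine ⟨by simp, Or.inl ?_⟩
  simp only [Set.mem_insert_iff, Set.mem_singleton_iff] at hx
  rcases hx with rfl | rfl | rfl <;> simp [WHRel]

lemma eq_zero_of_adj_B_of_adj_C {x : ZMod n} {w : Fin 3 × ZMod n}
    (hB : (WH n a b c d).Adj w (1, 0)) (hC : (WH n a b c d).Adj w (2, x)) : x = 0 := by
  obtain ⟨t, i⟩ := w
  obtain ⟨-, hB⟩ := hB
  obtain ⟨-, hC⟩ := hC
  simp only [WHRel] at hB hC
  fin_cases t <;> simp_all

lemma ne_zero_of_edgeTransitive (het : EdgeTransitive (WH n a b c d)) {x y : ZMod n}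
    (hx : x ∈ ({b, c, d} : Set (ZMod n))) (hy : y ∈ ({b, c, d} : Set (ZMod n))) (hy0 : y ≠ 0) :
    x ≠ 0 := by
  rintro rfl
  obtain ⟨w, hB, hC⟩ := het.exists_common_adj (adj_B_C hx) (adj_B_C hy)
    ⟨(0, 0), adj_A_B 0, adj_A_C 0⟩
  exact hy0 (eq_zero_of_adj_B_of_adj_C hB hC)

end WH

theorem no_edge_transitive_girth_three_general (n : ℕ) (a b c d : ZMod n)
    (hbc : b ≠ c) (hbd : b ≠ d)
    (het : EdgeTransitive (WH n a b c d)) :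
    (∀ x ∈ ({b, c, d} : Set (ZMod n)),
      ¬ ∃ w : Fin 3 × ZMod n,
          (WH n a b c d).Adj w (1, 0) ∧ (WH n a b c d).Adj w (2, x)) ∧
    b ≠ 0 ∧ c ≠ 0 ∧ d ≠ 0 := by
  have hb : b ∈ ({b, c, d} : Set (ZMod n)) := by simp
  have hc : c ∈ ({b, c, d} : Set (ZMod n)) := by simp
  have hd : d ∈ ({b, c, d} : Set (ZMod n)) := by simp
  have hb0 : b ≠ 0 := fun h =>
    WH.ne_zero_of_edgeTransitive het hb hc (fun hc0 => hbc (h.trans hc0.symm)) h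
  have hc0 : c ≠ 0 := WH.ne_zero_of_edgeTransitive het hc hb hb0
  have hd0 : d ≠ 0 := WH.ne_zero_of_edgeTransitive het hd hb hb0
  refine ⟨fun x hx ⟨w, hB, hC⟩ => ?_, hb0, hc0, hd0⟩
  have hx0 := WH.eq_zero_of_adj_B_of_adj_C hB hC
  simp only [Set.mem_insert_iff, Set.mem_singleton_iff] at hx
  rcases hx with rfl | rfl | rfl
  exacts [hb0 hx0, hc0 hx0, hd0 hx0]

theorem no_edge_transitive_girth_three (n : ℕ) (hn : 3 ≤ n) (a b c d : ZMod n)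
    (ha : 2 * a ≠ 0) (hbc : b ≠ c) (hbd : b ≠ d) (hcd : c ≠ d)
    (het : EdgeTransitive (WH n a b c d)) :
    (∀ x ∈ ({b, c, d} : Set (ZMod n)),
      ¬ ∃ w : Fin 3 × ZMod n,
          (WH n a b c d).Adj w (1, 0) ∧ (WH n a b c d).Adj w (2, x)) ∧
    b ≠ 0 ∧ c ≠ 0 ∧ d ≠ 0 :=
  no_edge_transitive_girth_three_general n a b c d hbc hbd het
end

section
/- If a Woolly Hat graph WH_n(a,b,c,d) is edge-transitive, then it is arc-transitive. -/
/-! For every `s` the map `A_i ↦ A_{s-i}`, `B_i ↦ C_{s-i}`, `C_i ↦ B_{s-i}` is an automorphism of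
`WH_n(a,b,c,d)`, and for `s = b` it swaps the ends of the edge `B_0 C_b`. In an edge-transitive
graph every arc can be moved onto this edge in one of its two orientations, and after composing
with the reflection if necessary, onto the arc `(B_0, C_b)`; so any two arcs are in one orbit. -/

namespace EdgeTransitive

variable {V : Type*} {G : SimpleGraph V}

theorem exists_iso_apply_eq_apply_eq (het : EdgeTransitive G) {x y : V} (hxy : G.Adj x y)
    (σ : G ≃g G) (hσx : σ x = y) (hσy : σ y = x) {u v : V} (huv : G.Adj u v) :
    ∃ φ : G ≃g G, φ u = x ∧ φ v = y := by
  obtain ⟨φ, hφ⟩ := het s(u, v) huv s(x, y) hxy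
  rcases Sym2.eq_iff.mp hφ with ⟨hu, hv⟩ | ⟨hu, hv⟩
  · exact ⟨φ, hu, hv⟩
  · exact ⟨φ.trans σ, by simp [hu, hσy], by simp [hv, hσx]⟩

theorem arc_transitive_of_swap (het : EdgeTransitive G) {x y : V} (hxy : G.Adj x y)
    (σ : G ≃g G) (hσx : σ x = y) (hσy : σ y = x) {u v u' v' : V}
    (huv : G.Adj u v) (hu'v' : G.Adj u' v') :
    ∃ φ : G ≃g G, φ u = u' ∧ φ v = v' := by
  obtain ⟨φ, hφu, hφv⟩ := het.exists_iso_apply_eq_apply_eq hxy σ hσx hσy huv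
  obtain ⟨ψ, hψu, hψv⟩ := het.exists_iso_apply_eq_apply_eq hxy σ hσx hσy hu'v'
  refine ⟨φ.trans ψ.symm, ?_, ?_⟩
  · simp [hφu, ← hψu]
  · simp [hφv, ← hψv]

end EdgeTransitive

namespace WH

variable {n : ℕ} {a b c d : ZMod n}

def reflection (n : ℕ) (s : ZMod n) : (Fin 3 × ZMod n) ≃ (Fin 3 × ZMod n) :=
  (Equiv.swap 1 2).prodCongr (Equiv.subLeft s)

@[simp]
theorem reflection_apply (s : ZMod n) (p : Fin 3 × ZMod n) :
    reflection n s p = (Equiv.swap 1 2 p.1, s - p.2) :=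
  rfl

theorem reflection_involutive (s : ZMod n) : Function.Involutive (reflection n s) := by
  rintro ⟨t, i⟩
  simp

theorem whRel_reflection {s : ZMod n} {u v : Fin 3 × ZMod n} (h : WHRel n a b c d u v) :
    WHRel n a b c d (reflection n s u) (reflection n s v) ∨
      WHRel n a b c d (reflection n s v) (reflection n s u) := by
  obtain ⟨t, i⟩ := u
  obtain ⟨t', j⟩ := v
  rcases h with ⟨rfl, rfl, hA⟩ | ⟨rfl, rfl, rfl⟩ | ⟨rfl, rfl, rfl⟩ | ⟨rfl, rfl, hBC⟩
  · exact .inl <| .inl ⟨rfl, rfl, by grind [reflection_apply]⟩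
  · exact .inl <| .inr <| .inr <| .inl ⟨rfl, rfl, rfl⟩
  · exact .inl <| .inr <| .inl ⟨rfl, rfl, rfl⟩
  · exact .inr <| .inr <| .inr <| .inr ⟨rfl, rfl, by grind [reflection_apply]⟩

theorem adj_reflection {s : ZMod n} {u v : Fin 3 × ZMod n} (h : (WH n a b c d).Adj u v) :
    (WH n a b c d).Adj (reflection n s u) (reflection n s v) :=
  ⟨(reflection n s).injective.ne h.1,
    h.2.elim whRel_reflection fun h => (whRel_reflection h).symm⟩

def reflectionIso (s : ZMod n) : WH n a b c d ≃g WH n a b c d where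
  toEquiv := reflection n s
  map_rel_iff' {u v} := ⟨fun h => by
    simpa only [reflection_involutive s u, reflection_involutive s v] using
      adj_reflection (s := s) h,
    adj_reflection⟩

@[simp]
theorem coe_reflectionIso (s : ZMod n) :
    ⇑(reflectionIso s : WH n a b c d ≃g WH n a b c d) = reflection n s :=
  rfl

theorem adj_B_zero_C (n : ℕ) (a b c d : ZMod n) : (WH n a b c d).Adj (1, 0) (2, b) :=
  ⟨by simp, .inl <| .inr <| .inr <| .inr ⟨rfl, rfl, .inl (zero_add b).symm⟩⟩

end WH

theorem arc_transitive_of_edge_transitive_general (n : ℕ) (a b c d : ZMod n)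
    (het : EdgeTransitive (WH n a b c d)) :
    ∀ u v u' v' : Fin 3 × ZMod n,
      (WH n a b c d).Adj u v → (WH n a b c d).Adj u' v' →
        ∃ φ : WH n a b c d ≃g WH n a b c d, φ u = u' ∧ φ v = v' := by
  intro u v u' v'
  exact het.arc_transitive_of_swap (WH.adj_B_zero_C n a b c d) (WH.reflectionIso b)
    (by simp) (by simp)

theorem arc_transitive_of_edge_transitive (n : ℕ) (hn : 3 ≤ n) (a b c d : ZMod n)
    (ha : 2 * a ≠ 0) (hbc : b ≠ c) (hbd : b ≠ d) (hcd : c ≠ d)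
    (het : EdgeTransitive (WH n a b c d)) :
    ∀ u v u' v' : Fin 3 × ZMod n,
      (WH n a b c d).Adj u v → (WH n a b c d).Adj u' v' →
        ∃ φ : WH n a b c d ≃g WH n a b c d, φ u = u' ∧ φ v = v' :=
  arc_transitive_of_edge_transitive_general n a b c d het
end

section
/- Let n ≥ 4 be even, a, b, c, d ∈ ℤ/nℤ with b, c, d pairwise distinct, a, b, d odd, c even, d = 2a + b and 2c = 3a + 3b. Then the Woolly Hat graph WH_n(a,b,c,d) is vertex-transitive. -/
namespace SimpleGraph

variable {V : Type*} {G : SimpleGraph V}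

lemma fromRel_adj_map {r : V → V → Prop} {f : V → V} (hf : Function.Injective f)
    (hr : ∀ u v, r u v → r (f u) (f v) ∨ r (f v) (f u)) {u v : V}
    (h : (fromRel r).Adj u v) : (fromRel r).Adj (f u) (f v) := by
  obtain ⟨hne, huv | hvu⟩ := h
  · exact ⟨hf.ne hne, hr u v huv⟩
  · exact ⟨hf.ne hne, (hr v u hvu).symm⟩

def Iso.ofInvolutive {f : V → V} (hf : Function.Involutive f)
    (hadj : ∀ u v, G.Adj u v → G.Adj (f u) (f v)) : G ≃g G where
  toEquiv := hf.toPerm f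
  map_rel_iff' {u v} := ⟨fun h => hf u ▸ hf v ▸ hadj _ _ h, hadj u v⟩

@[simp]
lemma Iso.ofInvolutive_apply {f : V → V} (hf : Function.Involutive f)
    (hadj : ∀ u v, G.Adj u v → G.Adj (f u) (f v)) (v : V) :
    Iso.ofInvolutive hf hadj v = f v :=
  rfl

lemma exists_iso_apply_eq_of_forall_exists (v₀ : V) (h : ∀ w, ∃ φ : G ≃g G, φ v₀ = w)
    (u v : V) : ∃ φ : G ≃g G, φ u = v := by
  obtain ⟨φ, rfl⟩ := h u
  obtain ⟨ψ, rfl⟩ := h v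
  exact ⟨φ.symm.trans ψ, by simp⟩

end SimpleGraph

lemma ZMod.two_eq_zero_or_one (x : ZMod 2) : x = 0 ∨ x = 1 := by
  revert x; decide

lemma ZMod.eq_zero_of_even {x : ZMod 2} (h : Even x) : x = 0 := by
  obtain ⟨k, rfl⟩ := h
  exact CharTwo.add_self_eq_zero k

lemma ZMod.eq_one_of_odd {x : ZMod 2} (h : Odd x) : x = 1 := by
  obtain ⟨k, rfl⟩ := h
  revert k; decide

namespace WH

variable {n : ℕ} {a b c d : ZMod n}

lemma whRel_add_right_iff (s : ZMod n) (t t' : Fin 3) (i j : ZMod n) :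
    WHRel n a b c d (t, i + s) (t', j + s) ↔ WHRel n a b c d (t, i) (t', j) := by
  simp only [WHRel, add_right_comm _ s, add_sub_right_comm _ s, add_left_inj]

def rotate (s : ZMod n) : WH n a b c d ≃g WH n a b c d where
  toEquiv := (Equiv.refl _).prodCongr (Equiv.addRight s)
  map_rel_iff' {u v} := by
    obtain ⟨t, i⟩ := u
    obtain ⟨t', j⟩ := v
    change (t, i + s) ≠ (t', j + s) ∧ _ ↔ (t, i) ≠ (t', j) ∧ _
    simp [whRel_add_right_iff]

@[simp]
lemma rotate_apply (s : ZMod n) (v : Fin 3 × ZMod n) :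
    rotate (a := a) (b := b) (c := c) (d := d) s v = (v.1, v.2 + s) :=
  rfl

def sigma (p : ZMod n →+ ZMod 2) (a b c : ZMod n) : Fin 3 × ZMod n → Fin 3 × ZMod n
  | (t, i) =>
    if p i = 0 then ![(1, -i), (0, -i), (2, c - i)] t
    else ![(2, a + b - i), (1, a + b - c - i), (0, a + b - i)] t

variable {p : ZMod n →+ ZMod 2}

lemma sigma_involutive (ha : p a = 1) (hb : p b = 1) (hc : p c = 0) :
    Function.Involutive (sigma p a b c) := by
  rintro ⟨t, i⟩
  rcases ZMod.two_eq_zero_or_one (p i) with hi | hi <;> fin_cases t <;>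
    simp [sigma, hi, ha, hb, hc, map_sub, map_add]

lemma sigma_map_whRel (ha : p a = 1) (hb : p b = 1) (hc : p c = 0)
    (hd : d = 2 * a + b) (h2c : 2 * c = 3 * a + 3 * b) (u v : Fin 3 × ZMod n)
    (h : WHRel n a b c d u v) :
    WHRel n a b c d (sigma p a b c u) (sigma p a b c v) ∨
      WHRel n a b c d (sigma p a b c v) (sigma p a b c u) := by
  have hpd : p d = 1 := by rw [hd, two_mul, map_add, map_add, ha, hb]; decide
  have h11 : (1 : ZMod 2) + 1 = 0 := rfl
  -- the identity behind the images of the edges `B_i C_{i+b}` and `B_i C_{i+d}` for odd `i`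
  have hcd : c - b = a + b - c + d := by linear_combination h2c - hd
  rcases ZMod.two_eq_zero_or_one (p u.2) with hi | hi <;>
    obtain ⟨t, i⟩ := u <;> obtain ⟨t', j⟩ := v <;>
    rcases h with ⟨rfl, rfl, rfl | rfl⟩ | ⟨rfl, rfl, rfl⟩ | ⟨rfl, rfl, rfl⟩ |
      ⟨rfl, rfl, rfl | rfl | rfl⟩ <;>
    simp only [WHRel, sigma, map_add, map_sub, hi, ha, hb, hc, hpd, h11, add_zero, zero_add,
      sub_self, zero_sub, one_ne_zero, ↓reduceIte, Matrix.cons_val_zero, Matrix.cons_val_one,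
      Matrix.cons_val, ZMod.neg_eq_self_mod_two] <;> grind

def sigmaIso (ha : p a = 1) (hb : p b = 1) (hc : p c = 0)
    (hd : d = 2 * a + b) (h2c : 2 * c = 3 * a + 3 * b) : WH n a b c d ≃g WH n a b c d :=
  .ofInvolutive (sigma_involutive ha hb hc) fun _ _ =>
    SimpleGraph.fromRel_adj_map (sigma_involutive ha hb hc).injective
      (sigma_map_whRel ha hb hc hd h2c)

end WH

theorem WH_vertex_transitive_family_one_general (n : ℕ) (hneven : Even n) (a b c d : ZMod n)
    (haodd : Odd a) (hbodd : Odd b) (hceven : Even c)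
    (hd : d = 2 * a + b) (h2c : 2 * c = 3 * a + 3 * b) :
    ∀ u v : Fin 3 × ZMod n,
      ∃ φ : WH n a b c d ≃g WH n a b c d, φ u = v := by
  let π := ZMod.castHom hneven.two_dvd (ZMod 2)
  have ha : π a = 1 := ZMod.eq_one_of_odd (haodd.map π)
  have hb : π b = 1 := ZMod.eq_one_of_odd (hbodd.map π)
  have hc : π c = 0 := ZMod.eq_zero_of_even (hceven.map π)
  let σ := WH.sigmaIso (p := π.toAddMonoidHom) ha hb hc hd h2c
  refine SimpleGraph.exists_iso_apply_eq_of_forall_exists (0, 0) ?_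
  rintro ⟨t, i⟩
  fin_cases t
  · exact ⟨WH.rotate i, by simp⟩
  · exact ⟨σ.trans (WH.rotate i), by simp [σ, WH.sigmaIso, WH.sigma]⟩
  · exact ⟨(WH.rotate a).trans (σ.trans (WH.rotate (i - b))),
      by simp [σ, WH.sigmaIso, WH.sigma, ha]⟩

theorem WH_vertex_transitive_family_one (n : ℕ) (hn : 4 ≤ n) (hneven : Even n) (a b c d : ZMod n)
    (hbc : b ≠ c) (hbd : b ≠ d) (hcd : c ≠ d)
    (haodd : Odd a) (hbodd : Odd b) (hdodd : Odd d) (hceven : Even c)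
    (hd : d = 2 * a + b) (h2c : 2 * c = 3 * a + 3 * b) :
    ∀ u v : Fin 3 × ZMod n,
      ∃ φ : WH n a b c d ≃g WH n a b c d, φ u = v :=
  WH_vertex_transitive_family_one_general n hneven a b c d haodd hbodd hceven hd h2c
end

section
/- For every odd integer m ≥ 3, the Woolly Hat graph WH_{4m}(2, m−2, 0, m+2) is vertex-transitive. -/
/-!
Since `m` is odd, `i ↦ (m * i mod 4, i mod m)` identifies `ZMod (4 * m)` with `ZMod 4 × ZMod m`.
Read the vertex `(t, i)` as the arc `x → x + label t` of the complete graph on `ZMod 4`, where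
`x = corner m i = m * i mod 4` and `label` sends `A, B, C` to `2, 3, 1`, decorated with `i mod m`.
Then two vertices are adjacent iff they are distinct arcs with the same tail and the same
decoration (the triangles `A_i B_i C_i`), or mutually reverse arcs whose decorations differ by
`± 2`. So every permutation `σ` of `ZMod 4` acts on the graph by `arcMap σ`, keeping decorations,
and translations of `ZMod (4 * m)` act as well. A translation followed by a transposition that
fixes the common tail moves any vertex to any other.
-/

namespace WH

def translate {n : ℕ} {a b c d : ZMod n} (k : ZMod n) : WH n a b c d ≃g WH n a b c d where
  toEquiv := (Equiv.refl _).prodCongr (Equiv.addRight k)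
  map_rel_iff' := by
    rintro ⟨t, i⟩ ⟨s, j⟩
    simp [WH, WHRel, add_right_comm _ k, add_sub_right_comm _ k]

abbrev familyTwo (m : ℕ) : SimpleGraph (Fin 3 × ZMod (4 * m)) :=
  WH (4 * m) 2 ((m : ZMod (4 * m)) - 2) 0 ((m : ZMod (4 * m)) + 2)

variable {m : ℕ}

def corner (m : ℕ) : ZMod (4 * m) →+ ZMod 4 :=
  (AddMonoidHom.mulLeft (m : ZMod 4)).comp
    (ZMod.castHom (dvd_mul_right 4 m) (ZMod 4)).toAddMonoidHom

lemma four_mul_natCast_self (m : ℕ) : 4 * (m : ZMod (4 * m)) = 0 := by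
  exact_mod_cast ZMod.natCast_self (4 * m)

def cornerLift (m : ℕ) : ZMod 4 →+ ZMod (4 * m) :=
  ZMod.lift 4 ⟨zmultiplesHom _ (m : ZMod (4 * m)), by simpa using four_mul_natCast_self m⟩

lemma cornerLift_natCast (k : ℕ) : cornerLift m k = k * m := by
  rw [← Int.cast_natCast, cornerLift, ZMod.lift_coe]
  simp

lemma corner_natCast_mul (k : ℕ) : corner m (k * m) = k * m * m := by
  simp [corner, mul_comm]

lemma natCast_mul_self_of_odd (hm : Odd m) : (m : ZMod 4) * m = 1 := by
  obtain ⟨k, rfl⟩ := hm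
  push_cast
  linear_combination (k * k + k : ZMod 4) * (by decide : (4 : ZMod 4) = 0)

lemma corner_cornerLift (hm : Odd m) (r : ZMod 4) : corner m (cornerLift m r) = r := by
  rw [← ZMod.natCast_zmod_val r, cornerLift_natCast, corner_natCast_mul, mul_assoc,
    natCast_mul_self_of_odd hm, mul_one]

lemma corner_two (hm : Odd m) : corner m 2 = 2 := by
  change (m : ZMod 4) * ZMod.castHom (dvd_mul_right 4 m) (ZMod 4) 2 = 2
  obtain ⟨k, rfl⟩ := hm
  rw [map_ofNat]
  push_cast
  linear_combination (k : ZMod 4) * (by decide : (4 : ZMod 4) = 0)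

def label : Fin 3 → ZMod 4 := ![2, 3, 1]

def ofLabel (k : ZMod 4) : Fin 3 := if k = 2 then 0 else if k = 3 then 1 else 2

lemma label_ne_zero (t : Fin 3) : label t ≠ 0 := by revert t; decide
lemma label_injective : Function.Injective label := by decide
lemma ofLabel_label (t : Fin 3) : ofLabel (label t) = t := by revert t; decide
lemma label_ofLabel {k : ZMod 4} (hk : k ≠ 0) : label (ofLabel k) = k := by revert k; decide

lemma two_ne_zero_zmod_four_mul : (2 : ZMod (4 * m)) ≠ 0 := by
  intro h
  have hdvd := (ZMod.natCast_eq_zero_iff 2 (4 * m)).1 (by exact_mod_cast h)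
  obtain rfl : m = 0 := by have := Nat.le_of_dvd two_pos hdvd; omega
  simp at hdvd

/-- `cornerLift m (label t - 2) ± 2` are the two residues mod `4 * m` that are `± 2` mod `m` and
have corner `label t`. -/
theorem familyTwo_adj_iff {u v : Fin 3 × ZMod (4 * m)} :
    (familyTwo m).Adj u v ↔ (u.1 ≠ v.1 ∧ v.2 = u.2) ∨ (label v.1 = -label u.1 ∧
      (v.2 = u.2 + cornerLift m (label u.1 - 2) + 2 ∨
        v.2 = u.2 + cornerLift m (label u.1 - 2) - 2)) := by
  obtain ⟨t, i⟩ := u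
  obtain ⟨s, j⟩ := v
  have h2 : (2 : ZMod (4 * m)) ≠ 0 := two_ne_zero_zmod_four_mul
  have h1 : cornerLift m 1 = m := by simpa using cornerLift_natCast (m := m) 1
  simp only [WH, WHRel, ne_eq, Prod.mk.injEq]
  fin_cases t <;> fin_cases s <;>
    simp [label, show (3 : ZMod 4) - 2 = 1 by decide, show (1 : ZMod 4) - 2 = -1 by decide, h1,
      -map_sub] <;>
    grind

def arcMap (σ : Equiv.Perm (ZMod 4)) (v : Fin 3 × ZMod (4 * m)) : Fin 3 × ZMod (4 * m) :=
  (ofLabel (σ (corner m v.2 + label v.1) - σ (corner m v.2)),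
    v.2 + cornerLift m (σ (corner m v.2) - corner m v.2))

lemma corner_arcMap (hm : Odd m) (σ : Equiv.Perm (ZMod 4)) (v : Fin 3 × ZMod (4 * m)) :
    corner m (arcMap σ v).2 = σ (corner m v.2) := by
  simp [arcMap, corner_cornerLift hm]

lemma label_arcMap (σ : Equiv.Perm (ZMod 4)) (v : Fin 3 × ZMod (4 * m)) :
    label (arcMap σ v).1 = σ (corner m v.2 + label v.1) - σ (corner m v.2) :=
  label_ofLabel <| sub_ne_zero.2 <| σ.injective.ne <| by simpa using label_ne_zero v.1

lemma arcMap_inv_arcMap (hm : Odd m) (σ : Equiv.Perm (ZMod 4)) (v : Fin 3 × ZMod (4 * m)) :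
    arcMap σ⁻¹ (arcMap σ v) = v := by
  refine Prod.ext (label_injective ?_) ?_
  · simp [label_arcMap, corner_arcMap hm]
  · change (arcMap σ v).2 +
      cornerLift m (σ⁻¹ (corner m (arcMap σ v).2) - corner m (arcMap σ v).2) = v.2
    rw [corner_arcMap hm, Equiv.Perm.inv_def, Equiv.symm_apply_apply, arcMap, add_assoc,
      ← map_add]
    simp

lemma familyTwo_adj_arcMap (hm : Odd m) (σ : Equiv.Perm (ZMod 4)) {u v : Fin 3 × ZMod (4 * m)}
    (huv : (familyTwo m).Adj u v) : (familyTwo m).Adj (arcMap σ u) (arcMap σ v) := by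
  rw [familyTwo_adj_iff] at huv ⊢
  rcases huv with ⟨hne, hv⟩ | ⟨hl, hv⟩
  · refine Or.inl ⟨fun h => hne (label_injective ?_), by simp [arcMap, hv]⟩
    have := congrArg label h
    rw [label_arcMap, label_arcMap, hv, sub_left_inj] at this
    exact add_left_cancel (σ.injective this)
  · set x := corner m u.2
    have hy : corner m v.2 = x + label u.1 := by
      rcases hv with hv | hv <;>
        simp only [hv, map_add, map_sub, corner_cornerLift hm, corner_two hm]
      · ring
      · linear_combination -(by decide : (4 : ZMod 4) = 0)
    have key : cornerLift m (label u.1 - 2) + cornerLift m (σ (x + label u.1) - (x + label u.1)) =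
        cornerLift m (σ x - x) + cornerLift m (σ (x + label u.1) - σ x - 2) := by
      rw [← map_add, ← map_add]
      ring_nf
    refine Or.inr ⟨?_, ?_⟩
    · rw [label_arcMap, label_arcMap, hy, hl, add_neg_cancel_right, neg_sub]
    · rw [label_arcMap]
      simp only [arcMap, hy]
      rcases hv with hv | hv <;> [left; right] <;> rw [hv] <;> linear_combination key

def arcAut (hm : Odd m) (σ : Equiv.Perm (ZMod 4)) : familyTwo m ≃g familyTwo m where
  toFun := arcMap σ
  invFun := arcMap σ⁻¹
  left_inv := arcMap_inv_arcMap hm σ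
  right_inv v := by simpa using arcMap_inv_arcMap hm σ⁻¹ v
  map_rel_iff' {u v} :=
    ⟨fun h => by
      simpa only [Equiv.coe_fn_mk, arcMap_inv_arcMap hm] using familyTwo_adj_arcMap hm σ⁻¹ h,
      familyTwo_adj_arcMap hm σ⟩

lemma arcMap_swap (t s : Fin 3) (i : ZMod (4 * m)) :
    arcMap (Equiv.swap (corner m i + label t) (corner m i + label s)) (t, i) = (s, i) := by
  have hfix : ∀ r : Fin 3, corner m i ≠ corner m i + label r := fun r h =>
    label_ne_zero r (by simpa using h.symm)
  simp [arcMap, Equiv.swap_apply_of_ne_of_ne (hfix t) (hfix s), ofLabel_label]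

end WH

theorem WH_vertex_transitive_family_two_general (m : ℕ) (hm : Odd m) :
    ∀ u v : Fin 3 × ZMod (4 * m),
      ∃ φ : WH (4 * m) 2 ((m : ZMod (4 * m)) - 2) 0 ((m : ZMod (4 * m)) + 2) ≃g
            WH (4 * m) 2 ((m : ZMod (4 * m)) - 2) 0 ((m : ZMod (4 * m)) + 2),
        φ u = v := by
  rintro ⟨t, i⟩ ⟨s, j⟩
  refine ⟨(WH.translate (j - i)).trans
    (WH.arcAut hm (Equiv.swap (WH.corner m j + WH.label t) (WH.corner m j + WH.label s))), ?_⟩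
  change WH.arcMap _ (t, i + (j - i)) = (s, j)
  rw [add_sub_cancel, WH.arcMap_swap]

theorem WH_vertex_transitive_family_two (m : ℕ) (hm : Odd m) (hm3 : 3 ≤ m) :
    ∀ u v : Fin 3 × ZMod (4 * m),
      ∃ φ : WH (4 * m) 2 ((m : ZMod (4 * m)) - 2) 0 ((m : ZMod (4 * m)) + 2) ≃g
            WH (4 * m) 2 ((m : ZMod (4 * m)) - 2) 0 ((m : ZMod (4 * m)) + 2),
        φ u = v :=
  WH_vertex_transitive_family_two_general m hm
end

section
/- No graph from item (2) of the vertex-transitivity classification is isomorphic to a graph from item (3): if n = 4m with m odd, a, b, d odd, c even, d = 2a+b, 2c = 3a+3b, then WH_n(a,b,c,d) is not isomorphic to WH_{4m}(2, m−2, 0, m+2). (Key reason: every cycle of WH_n(a,b,c,d) consisting only of a-, b- and d-edges through A-vertices has length divisible by 4, whereas the corresponding 'red' cycles of WH_{4m}(2,m−2,0,m+2) have length 2m, which is not divisible by 4; equivalently, WH_{4m}(2,m−2,0,m+2) contains 3-cycles through every vertex while the blue cycles of the other graph force a different cycle structure.) -/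
/-!
In `WH_n(a,b,c,d)` with `3a, b, d ≠ 0` every triangle is a fibre `{A_i, B_i, C_i}`, and fibres are
triangles only when `c = 0`. So for `c ≠ 0` the first graph is triangle-free while the second is not.
For `c = 0`, with `n` even and `a, b, d` odd, the parity of the index is a 2-colouring of the first
graph in which exactly the triangle edges are monochromatic, and the existence of such a colouring is
invariant under isomorphism. In the second graph such a colouring would be constant on fibres and
switch along every `a`-, `b`- and `d`-edge; but `2m` is reached from `0` both by `m` (odd) steps of
`a = 2` and by one `b`-step followed by one `d`-step.
-/

namespace SimpleGraph

variable {V W : Type*}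

def IsTriangleParity (G : SimpleGraph V) (χ : V → ZMod 2) : Prop :=
  ∀ ⦃u v⦄, G.Adj u v → (χ u = χ v ↔ ∃ w, G.Adj u w ∧ G.Adj v w)

theorem IsTriangleParity.comp_iso {G : SimpleGraph V} {H : SimpleGraph W} {χ : W → ZMod 2}
    (hχ : H.IsTriangleParity χ) (f : G ≃g H) : G.IsTriangleParity (χ ∘ f) := by
  intro u v huv
  rw [Function.comp_apply, Function.comp_apply, hχ (f.map_adj_iff.2 huv)]
  constructor
  · rintro ⟨w, huw, hvw⟩
    exact ⟨f.symm w, by simpa using f.map_adj_iff.1 (by simpa using huw),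
      by simpa using f.map_adj_iff.1 (by simpa using hvw)⟩
  · rintro ⟨w, huw, hvw⟩
    exact ⟨f w, f.map_adj_iff.2 huw, f.map_adj_iff.2 hvw⟩

theorem IsTriangleParity.apply_eq_add_one {G : SimpleGraph V} {χ : V → ZMod 2}
    (hχ : G.IsTriangleParity χ) {u v : V} (huv : G.Adj u v)
    (h : ¬∃ w, G.Adj u w ∧ G.Adj v w) : χ v = χ u + 1 :=
  (by decide : ∀ x y : ZMod 2, x ≠ y → y = x + 1) _ _ (mt (hχ huv).1 h)

end SimpleGraph

theorem map_eq_one_of_odd {R : Type*} [Semiring R] (φ : R →+* ZMod 2) {x : R} (hx : Odd x) :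
    φ x = 1 := by
  obtain ⟨k, rfl⟩ := hx
  rw [map_add, map_mul, map_ofNat, map_one, show (2 : ZMod 2) = 0 from rfl, zero_mul, zero_add]

theorem ZMod.ne_zero_of_odd {n : ℕ} (hn : 2 ∣ n) {x : ZMod n} (hx : Odd x) : x ≠ 0 := by
  rintro rfl
  simpa using map_eq_one_of_odd (ZMod.castHom hn (ZMod 2)) hx

theorem apply_add_nsmul_eq_add {G : Type*} [AddMonoid G] {ξ : G → ZMod 2} {s : G}
    (h : ∀ i, ξ (i + s) = ξ i + 1) (i : G) (k : ℕ) : ξ (i + k • s) = ξ i + k := by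
  induction k with
  | zero => simp
  | succ k ih => rw [succ_nsmul, ← add_assoc, h, ih]; push_cast; ring

namespace WH

variable {n : ℕ} {a b c d : ZMod n}

theorem snd_eq_and_eq_zero_of_triangle (h3a : 3 * a ≠ 0) (hb : b ≠ 0) (hd : d ≠ 0)
    {u v w : Fin 3 × ZMod n} (huv : (WH n a b c d).Adj u v) (huw : (WH n a b c d).Adj u w)
    (hvw : (WH n a b c d).Adj v w) : u.2 = v.2 ∧ c = 0 := by
  obtain ⟨s, i⟩ := u
  obtain ⟨t, j⟩ := v
  obtain ⟨r, k⟩ := w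
  simp only [WH, WHRel, ne_eq, Prod.mk.injEq] at huv huw hvw ⊢
  -- Three A-vertices force `±a ± a ± a = 0`; otherwise the triangle is `A_i, B_i, C_i` and one of
  -- the offsets `b, c, d` vanishes.
  fin_cases s <;> fin_cases t <;> fin_cases r <;> simp at huv huw hvw ⊢ <;> grind

theorem not_exists_adj_adj_of_snd_ne (h3a : 3 * a ≠ 0) (hb : b ≠ 0) (hd : d ≠ 0)
    {u v : Fin 3 × ZMod n} (huv : (WH n a b c d).Adj u v) (hne : u.2 ≠ v.2) :
    ¬∃ w, (WH n a b c d).Adj u w ∧ (WH n a b c d).Adj v w := fun ⟨_, huw, hvw⟩ =>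
  hne (snd_eq_and_eq_zero_of_triangle h3a hb hd huv huw hvw).1

theorem adj_zero_add (ha : a ≠ 0) (i : ZMod n) : (WH n a b c d).Adj (0, i) (0, i + a) := by
  simp [WH, WHRel, ha]

theorem adj_one_two_add {x : ZMod n} (hbcd : x = b ∨ x = c ∨ x = d) (i : ZMod n) :
    (WH n a b c d).Adj (1, i) (2, i + x) := by
  simp [WH, WHRel, hbcd]

theorem adj_of_fst_ne {s t : Fin 3} (hst : s ≠ t) (i : ZMod n) :
    (WH n a b 0 d).Adj (s, i) (t, i) := by
  refine ⟨fun h => hst (congrArg Prod.fst h), ?_⟩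
  fin_cases s <;> fin_cases t <;> simp_all [WHRel]

theorem exists_adj_and_adj (s t : Fin 3) (i : ZMod n) :
    ∃ w, (WH n a b 0 d).Adj (s, i) w ∧ (WH n a b 0 d).Adj (t, i) w := by
  obtain ⟨r, hrs, hrt⟩ := (by decide : ∀ s t : Fin 3, ∃ r, r ≠ s ∧ r ≠ t) s t
  exact ⟨(r, i), adj_of_fst_ne hrs.symm i, adj_of_fst_ne hrt.symm i⟩

theorem odd_sub_of_adj (ha : Odd a) (hb : Odd b) (hd : Odd d) {u v : Fin 3 × ZMod n}
    (huv : (WH n a b 0 d).Adj u v) (hne : u.2 ≠ v.2) : Odd (v.2 - u.2) := by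
  have : v.2 - u.2 = a ∨ v.2 - u.2 = -a ∨ v.2 - u.2 = b ∨ v.2 - u.2 = -b ∨
      v.2 - u.2 = d ∨ v.2 - u.2 = -d := by
    simp only [WH, WHRel] at huv
    grind
  rcases this with h | h | h | h | h | h <;> rw [h]
  all_goals first | assumption | exact Odd.neg ‹_›

theorem isTriangleParity (hn : 2 ∣ n) (ha : Odd a) (hb : Odd b) (hd : Odd d) :
    (WH n a b 0 d).IsTriangleParity (fun v => ZMod.castHom hn (ZMod 2) v.2) := by
  rintro ⟨s, i⟩ ⟨t, j⟩ huv
  by_cases hij : i = j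
  · subst hij
    exact iff_of_true rfl (exists_adj_and_adj s t i)
  · refine iff_of_false (fun h => ?_) (not_exists_adj_adj_of_snd_ne ?_ ?_ ?_ huv hij)
    · have := map_eq_one_of_odd (ZMod.castHom hn (ZMod 2)) (odd_sub_of_adj ha hb hd huv hij)
      simp_all
    · exact ZMod.ne_zero_of_odd hn (Odd.mul ⟨1, by norm_num⟩ ha)
    · exact ZMod.ne_zero_of_odd hn hb
    · exact ZMod.ne_zero_of_odd hn hd

theorem not_isTriangleParity (h3a : 3 * a ≠ 0) (hb : b ≠ 0) (hd : d ≠ 0) {k : ℕ} (hk : Odd k)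
    (hkabd : k • a = b + d) (χ : Fin 3 × ZMod n → ZMod 2) :
    ¬(WH n a b 0 d).IsTriangleParity χ := by
  intro hχ
  have hfiber : ∀ t i, χ (t, i) = χ (0, i) := by
    intro t i
    by_cases ht : t = 0
    · rw [ht]
    · exact ((hχ (adj_of_fst_ne ht i)).2 (exists_adj_and_adj t 0 i))
  have hstep : ∀ {s t i j}, (WH n a b 0 d).Adj (s, i) (t, j) → i ≠ j →
      χ (0, j) = χ (0, i) + 1 := fun {s t _ _} huv hij => by
    rw [← hfiber t, ← hfiber s]
    exact hχ.apply_eq_add_one huv (not_exists_adj_adj_of_snd_ne h3a hb hd huv hij)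
  have ha : a ≠ 0 := fun h => h3a (by rw [h, mul_zero])
  have step_a : ∀ i, χ (0, i + a) = χ (0, i) + 1 := fun i =>
    hstep (adj_zero_add ha i) (by simpa using ha)
  have step_b : ∀ i, χ (0, i + b) = χ (0, i) + 1 := fun i =>
    hstep (adj_one_two_add (Or.inl rfl) i) (by simpa using hb)
  have step_d : ∀ i, χ (0, i + d) = χ (0, i) + 1 := fun i =>
    hstep (adj_one_two_add (Or.inr (Or.inr rfl)) i) (by simpa using hd)
  have h1 : χ (0, b + d) = χ (0, 0) + 1 := by
    simpa [hkabd, ZMod.natCast_eq_one_iff_odd.2 hk] using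
      apply_add_nsmul_eq_add (ξ := fun i => χ (0, i)) step_a 0 k
  have h2 : χ (0, b + d) = χ (0, 0) + 1 + 1 := by
    rw [step_d, ← zero_add b, step_b]
  exact (by decide : ∀ x : ZMod 2, x + 1 ≠ x + 1 + 1) _ (h1.symm.trans h2)

end WH

theorem family_one_not_iso_family_two_general (m : ℕ) (hm : Odd m) (hm1 : 1 < m)
    (a b c d : ZMod (4 * m))
    (haodd : Odd a) (hbodd : Odd b) (hdodd : Odd d) :
    IsEmpty (WH (4 * m) a b c d ≃g
      WH (4 * m) 2 ((m : ZMod (4 * m)) - 2) 0 ((m : ZMod (4 * m)) + 2)) := by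
  have hn : 2 ∣ 4 * m := ⟨2 * m, by ring⟩
  have hodd : ∀ {x : ZMod (4 * m)}, Odd x → x ≠ 0 := ZMod.ne_zero_of_odd hn
  have h3 : ∀ {x : ZMod (4 * m)}, Odd x → Odd (3 * x) := Odd.mul ⟨1, by norm_num⟩
  refine ⟨fun f => ?_⟩
  by_cases hc : c = 0
  · subst hc
    have h6 : 3 * (2 : ZMod (4 * m)) ≠ 0 := by
      rw [show 3 * (2 : ZMod (4 * m)) = ((6 : ℕ) : ZMod _) by norm_num, Ne,
        ZMod.natCast_eq_zero_iff]
      exact fun h => by have := Nat.le_of_dvd (by norm_num) h; omega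
    exact WH.not_isTriangleParity h6 (hodd (hm.natCast.sub_even even_two))
      (hodd (hm.natCast.add_even even_two)) hm (by ring) _
      ((WH.isTriangleParity hn haodd hbodd hdodd).comp_iso f.symm)
  · have hfiber : ∀ {s t : Fin 3}, s ≠ t →
        (WH (4 * m) a b c d).Adj (f.symm (s, 0)) (f.symm (t, 0)) :=
      fun hst => f.symm.map_adj_iff.2 (WH.adj_of_fst_ne hst 0)
    exact hc (WH.snd_eq_and_eq_zero_of_triangle (hodd (h3 haodd)) (hodd hbodd) (hodd hdodd)
      (hfiber (s := 0) (t := 1) (by decide)) (hfiber (t := 2) (by decide))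
      (hfiber (s := 1) (t := 2) (by decide))).2

theorem family_one_not_iso_family_two (m : ℕ) (hm : Odd m) (hm1 : 1 < m)
    (a b c d : ZMod (4 * m))
    (haodd : Odd a) (hbodd : Odd b) (hdodd : Odd d) (hceven : Even c)
    (hd : d = 2 * a + b) (h2c : 2 * c = 3 * a + 3 * b) :
    IsEmpty (WH (4 * m) a b c d ≃g
      WH (4 * m) 2 ((m : ZMod (4 * m)) - 2) 0 ((m : ZMod (4 * m)) + 2)) :=
  family_one_not_iso_family_two_general m hm hm1 a b c d haodd hbodd hdodd
end
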